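/- For every ε ∈ (0, c₀²/2) there exists κ₀ > 0 such that for all κ ∈ [0, κ₀) the interval [0, c₀²/2 − ε] is contained in the domain of G_κ, and as κ → 0⁺: sup over φ ∈ [0, c₀²/2 − ε] of |G_κ(φ) − G₀(φ)| → 0, and sup over φ ∈ [0, c₀²/2 − ε] of |G_κ'(φ) − G₀'(φ)| → 0 (i.e., G_κ → G₀ in C¹([0, c₀²/2 − ε])). -/

import Mathlib

open Filter Topology

/-- `H_κ(ρ) = (c_κ²/2)·(1 − 1/ρ²) − κ·ln ρ`. -/
noncomputable def Hfun (κ c ρ : ℝ) : ℝ := c ^ 2 / 2 * (1 - 1 / ρ ^ 2) - κ * Real.log ρ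

open Set

lemma hasDerivAt_Hfun (κ c ρ : ℝ) (hρ : 0 < ρ) :
    HasDerivAt (fun r => Hfun κ c r) ((c ^ 2 - κ * ρ ^ 2) / ρ ^ 3) ρ := by
  have h1 : HasDerivAt (fun r : ℝ => r ^ 2) (2 * ρ) ρ := by
    simpa using (hasDerivAt_pow 2 ρ)
  have h2 : HasDerivAt (fun r : ℝ => 1 / r ^ 2) (-(2 * ρ) / (ρ ^ 2) ^ 2) ρ := by
    simpa [one_div, Pi.inv_def] using h1.inv (by positivity)
  have h3 : HasDerivAt (fun r : ℝ => Real.log r) ρ⁻¹ ρ := Real.hasDerivAt_log (ne_of_gt hρ)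
  have h4 := ((h2.const_sub 1).const_mul (c ^ 2 / 2)).sub (h3.const_mul κ)
  have hval : (c ^ 2 - κ * ρ ^ 2) / ρ ^ 3
      = c ^ 2 / 2 * -(-(2 * ρ) / (ρ ^ 2) ^ 2) - κ * ρ⁻¹ := by
    field_simp
  rw [hval]
  exact h4

/-- Lower bound on increments of `Hfun` on `[1, R]`. -/
lemma Hfun_lower {κ c R a b : ℝ} (hκ : 0 ≤ κ) (hb : 1 ≤ b) (hab : b ≤ a) (haR : a ≤ R) :
    (c ^ 2 / R ^ 4 - κ) * (a - b) ≤ Hfun κ c a - Hfun κ c b := by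
  have hb0 : 0 < b := lt_of_lt_of_le one_pos hb
  have ha0 : 0 < a := lt_of_lt_of_le hb0 hab
  have hR1 : 1 ≤ R := le_trans (le_trans hb hab) haR
  have hR0 : 0 < R := lt_of_lt_of_le one_pos hR1
  have hlog : Real.log a - Real.log b ≤ a - b := by
    have h1 : Real.log (a / b) ≤ a / b - 1 :=
      Real.log_le_sub_one_of_pos (by positivity)
    rw [Real.log_div (ne_of_gt ha0) (ne_of_gt hb0)] at h1
    have : a / b - 1 ≤ a - b := by
      rw [div_sub_one (ne_of_gt hb0), div_le_iff₀ hb0]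
      nlinarith
    linarith
  have hmain : c ^ 2 / R ^ 4 * (a - b) ≤ c ^ 2 / 2 * (1 - 1 / a ^ 2) - c ^ 2 / 2 * (1 - 1 / b ^ 2) := by
    have key : c ^ 2 / 2 * (1 - 1 / a ^ 2) - c ^ 2 / 2 * (1 - 1 / b ^ 2)
        = c ^ 2 * ((a + b) * (a - b)) / (2 * a ^ 2 * b ^ 2) := by
      field_simp; ring
    rw [key, div_mul_eq_mul_div, div_le_div_iff₀ (by positivity) (by positivity)]
    have h2 : b ≤ R := le_trans hab haR
    have hc2 : 0 ≤ c ^ 2 := sq_nonneg c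
    have hab2 : 0 ≤ a - b := by linarith
    have haR2 : a ^ 2 ≤ R ^ 2 := by nlinarith
    have hbR2 : b ^ 2 ≤ R ^ 2 := by nlinarith
    have hprod : a ^ 2 * b ^ 2 ≤ R ^ 4 := by nlinarith [sq_nonneg a, sq_nonneg R]
    nlinarith [mul_le_mul_of_nonneg_left hprod (mul_nonneg hc2 hab2),
      mul_nonneg (mul_nonneg (mul_nonneg hc2 hab2) (pow_nonneg hR0.le 4))
        (show (0:ℝ) ≤ a + b - 2 by linarith)]
  have : -(κ * (a - b)) ≤ -(κ * Real.log a - κ * Real.log b) := by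
    have := mul_le_mul_of_nonneg_left hlog hκ
    nlinarith
  simp only [Hfun]
  nlinarith

/-- Derivative within a set of a left inverse. -/
lemma hasDerivWithinAt_leftInv {f g : ℝ → ℝ} {s : Set ℝ} {f' a : ℝ}
    (hg : ContinuousWithinAt g s a) (hf : HasDerivAt f f' (g a)) (hf' : f' ≠ 0)
    (hfg : ∀ y ∈ s, f (g y) = y) (ha : a ∈ s) :
    HasDerivWithinAt g f'⁻¹ s a := by
  rw [hasDerivWithinAt_iff_tendsto_slope]
  have hinj : ∀ y ∈ s, y ≠ a → g y ≠ g a := by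
    intro y hy hya hgy
    exact hya (by rw [← hfg y hy, hgy, hfg a ha])
  have hgt : Tendsto g (𝓝[s \ {a}] a) (𝓝[≠] (g a)) := by
    apply tendsto_nhdsWithin_of_tendsto_nhds_of_eventually_within
    · exact hg.tendsto.mono_left (nhdsWithin_mono _ (by intro x hx; exact hx.1))
    · filter_upwards [self_mem_nhdsWithin] with y hy
      exact hinj y hy.1 hy.2
  have hslope : Tendsto (fun y => slope f (g a) (g y)) (𝓝[s \ {a}] a) (𝓝 f') :=
    (hasDerivAt_iff_tendsto_slope.1 hf).comp hgt
  have := hslope.inv₀ hf'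
  apply this.congr'
  filter_upwards [self_mem_nhdsWithin] with y hy
  have hy1 : y ∈ s := hy.1
  have hy2 : y ≠ a := hy.2
  have hne : g y ≠ g a := hinj y hy1 hy2
  have h1 : f (g y) = y := hfg y hy1
  have h2 : f (g a) = a := hfg a ha
  simp only [slope, Function.comp]
  rw [h1, h2]
  simp only [vsub_eq_sub, smul_eq_mul]
  rw [mul_inv, inv_inv]
  field_simp

/-- Continuity within a set from a Lipschitz-type bound. -/
lemma continuousWithinAt_of_lip {g : ℝ → ℝ} {s : Set ℝ} {a K : ℝ} (hK : 0 ≤ K)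
    (h : ∀ y ∈ s, |g y - g a| ≤ K * |y - a|) : ContinuousWithinAt g s a := by
  rw [Metric.continuousWithinAt_iff]
  intro ε hε
  refine ⟨ε / (K + 1), by positivity, fun y hy hd => ?_⟩
  have h1 := h y hy
  rw [Real.dist_eq] at hd ⊢
  have : K * |y - a| ≤ K * (ε / (K + 1)) :=
    mul_le_mul_of_nonneg_left hd.le hK
  have h2 : K * (ε / (K + 1)) < ε := by
    rw [mul_div_assoc']
    rw [div_lt_iff₀ (by linarith)]
    nlinarith
  linarith

noncomputable def ffun (z : ℝ) : ℝ := Real.log (z ^ 2 + 1) - z ^ 2 / 2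

lemma hasDerivAt_ffun (z : ℝ) :
    HasDerivAt ffun (2 * z / (z ^ 2 + 1) - z) z := by
  have h1 : HasDerivAt (fun w : ℝ => w ^ 2 + 1) (2 * z) z := by
    simpa using (hasDerivAt_pow 2 z).add_const 1
  have h2 : HasDerivAt (fun w : ℝ => Real.log (w ^ 2 + 1)) (2 * z / (z ^ 2 + 1)) z := by
    have := (Real.hasDerivAt_log (by positivity : (z:ℝ) ^ 2 + 1 ≠ 0)).comp z h1
    simpa [div_eq_inv_mul, Function.comp_def] using this
  have h3 : HasDerivAt (fun w : ℝ => w ^ 2 / 2) z z := by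
    have := (hasDerivAt_pow 2 z).div_const 2
    simpa using this
  exact h2.sub h3

lemma strictAntiOn_ffun : StrictAntiOn ffun (Ici 1) := by
  apply strictAntiOn_of_deriv_neg (convex_Ici 1)
  · intro z _
    exact (hasDerivAt_ffun z).continuousAt.continuousWithinAt
  · intro z hz
    rw [interior_Ici] at hz
    rw [(hasDerivAt_ffun z).deriv]
    have hz1 : 1 < z := hz
    have h1 : (0:ℝ) < z ^ 2 + 1 := by positivity
    rw [sub_neg, div_lt_iff₀ h1]
    nlinarith

noncomputable def gfun (κ z : ℝ) : ℝ :=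
  κ * Real.log z + Real.log ((z - Real.sqrt κ) ^ 2 + 1) - z ^ 2 / 2 + κ / 2
    - κ / 2 * Real.log κ

lemma hasDerivAt_gfun (κ z : ℝ) (hz : 0 < z) :
    HasDerivAt (gfun κ)
      (κ / z + 2 * (z - Real.sqrt κ) / ((z - Real.sqrt κ) ^ 2 + 1) - z) z := by
  set s := Real.sqrt κ
  have h1 : HasDerivAt (fun w : ℝ => κ * Real.log w) (κ / z) z := by
    have := (Real.hasDerivAt_log (ne_of_gt hz)).const_mul κ
    simpa [div_eq_mul_inv] using this
  have h2 : HasDerivAt (fun w : ℝ => (w - s) ^ 2 + 1) (2 * (z - s)) z := by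
    have h := ((hasDerivAt_id z).sub_const s).pow 2
    simpa using h.add_const 1
  have h3 : HasDerivAt (fun w : ℝ => Real.log ((w - s) ^ 2 + 1))
      (2 * (z - s) / ((z - s) ^ 2 + 1)) z := by
    have := (Real.hasDerivAt_log (by positivity : (z - s) ^ 2 + 1 ≠ 0)).comp z h2
    simpa [div_eq_inv_mul, Function.comp_def] using this
  have h4 : HasDerivAt (fun w : ℝ => w ^ 2 / 2) z z := by
    simpa using (hasDerivAt_pow 2 z).div_const 2
  have h5 := (((h1.add h3).sub h4).add_const (κ / 2)).sub_const (κ / 2 * Real.log κ)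
  exact h5

lemma strictAntiOn_gfun {κ : ℝ} (hκ : 0 ≤ κ) :
    StrictAntiOn (gfun κ) (Ici (Real.sqrt (1 + κ))) := by
  have hs1 : 1 ≤ Real.sqrt (1 + κ) := by
    have h := Real.sqrt_le_sqrt (show (1:ℝ) ≤ 1 + κ by linarith)
    simpa using h
  apply strictAntiOn_of_deriv_neg (convex_Ici _)
  · intro z hz
    have hz0 : 0 < z := lt_of_lt_of_le one_pos (le_trans hs1 hz)
    exact (hasDerivAt_gfun κ z hz0).continuousAt.continuousWithinAt
  · intro z hz
    rw [interior_Ici] at hz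
    have hz0 : 0 < z := lt_of_lt_of_le one_pos (le_trans hs1 hz.le)
    rw [(hasDerivAt_gfun κ z hz0).deriv]
    set s := Real.sqrt κ with hs
    have hs0 : 0 ≤ s := Real.sqrt_nonneg κ
    have hs2 : s ^ 2 = κ := Real.sq_sqrt hκ
    have hzgt : Real.sqrt (1 + κ) < z := hz
    have hz2 : 1 + κ < z ^ 2 := by
      have h := Real.sq_sqrt (by linarith : (0:ℝ) ≤ 1 + κ)
      nlinarith [mul_pos (sub_pos.2 hzgt) (show (0:ℝ) < z + Real.sqrt (1 + κ) by positivity)]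
    have hzs : s < z := by nlinarith
    have hd : (0:ℝ) < (z - s) ^ 2 + 1 := by positivity
    have key : κ / z + 2 * (z - s) / ((z - s) ^ 2 + 1) - z
        = -((z - s) ^ 2 * (z ^ 2 - s ^ 2 - 1)) / (z * ((z - s) ^ 2 + 1)) := by
      rw [← hs2]
      field_simp
      ring
    rw [key]
    apply div_neg_of_neg_of_pos
    · have h1 : 0 < z ^ 2 - s ^ 2 - 1 := by nlinarith
      have h2 : 0 < (z - s) ^ 2 := pow_pos (sub_pos.2 hzs) 2
      exact neg_lt_zero.2 (mul_pos h2 h1)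
    · positivity

lemma gfun_tendsto (z : ℝ) (hz : 1 < z) :
    Tendsto (fun κ => gfun κ z) (𝓝[>] (0:ℝ)) (𝓝 (ffun z)) := by
  have hκ0 : Tendsto (fun κ : ℝ => κ) (𝓝[>] (0:ℝ)) (𝓝 0) :=
    tendsto_id.mono_left nhdsWithin_le_nhds
  have t1 : Tendsto (fun κ : ℝ => κ * Real.log z) (𝓝[>] (0:ℝ)) (𝓝 0) := by
    simpa using hκ0.mul_const (Real.log z)
  have t2 : Tendsto (fun κ : ℝ => Real.log ((z - Real.sqrt κ) ^ 2 + 1)) (𝓝[>] (0:ℝ))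
      (𝓝 (Real.log (z ^ 2 + 1))) := by
    have hsq : Tendsto (fun κ : ℝ => (z - Real.sqrt κ) ^ 2 + 1) (𝓝[>] (0:ℝ)) (𝓝 (z ^ 2 + 1)) := by
      have h1 : Tendsto Real.sqrt (𝓝 (0:ℝ)) (𝓝 0) := by
        have := Real.continuous_sqrt.continuousAt (x := (0:ℝ))
        unfold ContinuousAt at this
        simpa using this
      have h2 := ((tendsto_const_nhds (x := z)).sub (h1.comp hκ0)).pow 2
      simpa using h2.add_const 1
    exact (Real.continuousAt_log (by positivity)).tendsto.comp hsq
  have t3 : Tendsto (fun κ : ℝ => κ / 2) (𝓝[>] (0:ℝ)) (𝓝 0) := by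
    simpa using hκ0.div_const 2
  have t4 : Tendsto (fun κ : ℝ => κ / 2 * Real.log κ) (𝓝[>] (0:ℝ)) (𝓝 0) := by
    have h := Real.continuous_mul_log.continuousAt (x := (0:ℝ))
    have h2 : Tendsto (fun κ : ℝ => κ * Real.log κ) (𝓝 (0:ℝ)) (𝓝 0) := by
      unfold ContinuousAt at h
      simpa using h
    have h3 : Tendsto (fun κ : ℝ => κ * Real.log κ) (𝓝[>] (0:ℝ)) (𝓝 0) :=
      h2.mono_left nhdsWithin_le_nhds
    have h4 : Tendsto (fun κ : ℝ => κ * Real.log κ / 2) (𝓝[>] (0:ℝ)) (𝓝 0) := by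
      simpa using h3.div_const 2
    exact h4.congr (fun κ => by ring)
  have := (((t1.add t2).sub (tendsto_const_nhds (x := z ^ 2 / 2))).add t3).sub t4
  simpa [gfun, ffun] using this

lemma gfun_c_eq_zero (c : ℝ → ℝ)
    (hck : ∀ κ : ℝ, 0 < κ → Real.sqrt (1 + κ) < c κ ∧
      (c κ) ^ κ * ((c κ - Real.sqrt κ) ^ 2 + 1)
        = Real.exp (((c κ) ^ 2 - κ) / 2) * κ ^ (κ / 2))
    (κ : ℝ) (hκ : 0 < κ) : gfun κ (c κ) = 0 := by
  obtain ⟨h1, h2⟩ := hck κ hκ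
  have hc1 : 1 ≤ Real.sqrt (1 + κ) := by
    have h := Real.sqrt_le_sqrt (show (1:ℝ) ≤ 1 + κ by linarith)
    simpa using h
  have hcpos : 0 < c κ := lt_of_lt_of_le one_pos (le_of_lt (lt_of_le_of_lt hc1 h1))
  have e1 : Real.log ((c κ) ^ κ * ((c κ - Real.sqrt κ) ^ 2 + 1))
      = κ * Real.log (c κ) + Real.log ((c κ - Real.sqrt κ) ^ 2 + 1) := by
    rw [Real.log_mul (ne_of_gt (Real.rpow_pos_of_pos hcpos κ)) (by positivity),
      Real.log_rpow hcpos]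
  have e2 : Real.log (Real.exp (((c κ) ^ 2 - κ) / 2) * κ ^ (κ / 2))
      = ((c κ) ^ 2 - κ) / 2 + κ / 2 * Real.log κ := by
    rw [Real.log_mul (Real.exp_ne_zero _) (ne_of_gt (Real.rpow_pos_of_pos hκ _)),
      Real.log_exp, Real.log_rpow hκ]
  have := congrArg Real.log h2
  rw [e1, e2] at this
  simp only [gfun]
  linarith

lemma c_tendsto (c : ℝ → ℝ)
    (hc0 : 1 < c 0 ∧ (c 0) ^ 2 + 1 = Real.exp ((c 0) ^ 2 / 2))
    (hck : ∀ κ : ℝ, 0 < κ → Real.sqrt (1 + κ) < c κ ∧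
      (c κ) ^ κ * ((c κ - Real.sqrt κ) ^ 2 + 1)
        = Real.exp (((c κ) ^ 2 - κ) / 2) * κ ^ (κ / 2)) :
    Tendsto c (𝓝[>] (0:ℝ)) (𝓝 (c 0)) := by
  have hc01 : 1 < c 0 := hc0.1
  have hfc0 : ffun (c 0) = 0 := by
    simp only [ffun]
    rw [hc0.2, Real.log_exp]
    ring
  rw [Metric.tendsto_nhds]
  intro ε hε
  set δ := min (ε / 2) ((c 0 - 1) / 2) with hδdef
  have hδpos : 0 < δ := lt_min (by linarith) (by linarith)
  have hδlt : δ < c 0 - 1 := lt_of_le_of_lt (min_le_right _ _) (by linarith)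
  have hδε : δ < ε := lt_of_le_of_lt (min_le_left _ _) (by linarith)
  have hz1 : 1 < c 0 - δ := by linarith
  have hz2 : 1 < c 0 + δ := by linarith
  -- values of f at c 0 ± δ
  have hf1 : 0 < ffun (c 0 - δ) := by
    have := strictAntiOn_ffun (show c 0 - δ ∈ Ici 1 by simp; linarith)
      (show c 0 ∈ Ici 1 by simp; linarith) (by linarith)
    rw [hfc0] at this; linarith
  have hf2 : ffun (c 0 + δ) < 0 := by
    have := strictAntiOn_ffun (show c 0 ∈ Ici 1 by simp; linarith)
      (show c 0 + δ ∈ Ici 1 by simp; linarith) (by linarith)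
    rw [hfc0] at this; linarith
  have hg1 := (gfun_tendsto (c 0 - δ) hz1).eventually (eventually_gt_nhds hf1)
  have hg2 := (gfun_tendsto (c 0 + δ) hz2).eventually (eventually_lt_nhds hf2)
  have hsq : ∀ᶠ κ in 𝓝[>] (0:ℝ), Real.sqrt (1 + κ) < c 0 - δ := by
    have h1 : Tendsto (fun κ : ℝ => Real.sqrt (1 + κ)) (𝓝[>] (0:ℝ)) (𝓝 1) := by
      have h0 : Tendsto (fun κ : ℝ => 1 + κ) (𝓝[>] (0:ℝ)) (𝓝 1) := by
        have := (tendsto_id.mono_left nhdsWithin_le_nhds :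
          Tendsto (fun κ : ℝ => κ) (𝓝[>] (0:ℝ)) (𝓝 0)).const_add 1
        simpa using this
      have h2 : ContinuousAt Real.sqrt 1 := Real.continuous_sqrt.continuousAt
      have := h2.tendsto.comp h0
      simpa [Real.sqrt_one, Function.comp_def] using this
    exact h1.eventually (eventually_lt_nhds hz1)
  filter_upwards [hg1, hg2, hsq, self_mem_nhdsWithin] with κ hκ1 hκ2 hκ3 hκpos
  have hκpos' : (0:ℝ) < κ := hκpos
  have hgc := gfun_c_eq_zero c hck κ hκpos'
  have hmono := strictAntiOn_gfun (le_of_lt hκpos')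
  have hcmem : c κ ∈ Ici (Real.sqrt (1 + κ)) := le_of_lt (hck κ hκpos').1
  have hmem1 : c 0 - δ ∈ Ici (Real.sqrt (1 + κ)) := le_of_lt hκ3
  have hmem2 : c 0 + δ ∈ Ici (Real.sqrt (1 + κ)) := by
    simp only [mem_Ici] at hmem1 ⊢; linarith
  have hlow : c 0 - δ < c κ := by
    by_contra h
    push_neg at h
    rcases eq_or_lt_of_le h with h | h
    · rw [h] at hgc; linarith
    · have := hmono hcmem hmem1 h
      rw [hgc] at this; linarith
  have hhigh : c κ < c 0 + δ := by
    by_contra h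
    push_neg at h
    rcases eq_or_lt_of_le h with h | h
    · rw [← h] at hgc; linarith
    · have := hmono hmem2 hcmem h
      rw [hgc] at this; linarith
  rw [Real.dist_eq, abs_lt]
  constructor <;> linarith

set_option maxHeartbeats 1600000 in
/-- `G_κ → G₀` in `C¹([0, c₀²/2 − ε])` as `κ → 0⁺`.
Here `c κ = c_κ` for `κ > 0`, `c 0 = c₀`, and `G κ` is the inverse of the restriction
of `H_κ` to `[1, c_κ/√κ]` (to `[1, ∞)` when `κ = 0`). -/
theorem stmt17 (c : ℝ → ℝ)
    (hc0 : 1 < c 0 ∧ (c 0) ^ 2 + 1 = Real.exp ((c 0) ^ 2 / 2))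
    (hck : ∀ κ : ℝ, 0 < κ → Real.sqrt (1 + κ) < c κ ∧
      (c κ) ^ κ * ((c κ - Real.sqrt κ) ^ 2 + 1)
        = Real.exp (((c κ) ^ 2 - κ) / 2) * κ ^ (κ / 2))
    (G : ℝ → ℝ → ℝ)
    (hG0 : ∀ ρ : ℝ, 1 ≤ ρ → G 0 (Hfun 0 (c 0) ρ) = ρ)
    (hGk : ∀ κ : ℝ, 0 < κ → ∀ ρ : ℝ, 1 ≤ ρ → ρ ≤ c κ / Real.sqrt κ →
      G κ (Hfun κ (c κ) ρ) = ρ)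
    (ε : ℝ) (hε1 : 0 < ε) (hε2 : ε < (c 0) ^ 2 / 2) :
    ∃ κ₀ > (0:ℝ),
      (∀ κ : ℝ, 0 < κ → κ < κ₀ →
        (c 0) ^ 2 / 2 - ε ≤ Hfun κ (c κ) (c κ / Real.sqrt κ)) ∧
      (∀ η > (0:ℝ), ∃ δ > (0:ℝ), ∀ κ : ℝ, 0 < κ → κ < δ → κ < κ₀ →
        ∀ x ∈ Set.Icc (0:ℝ) ((c 0) ^ 2 / 2 - ε),
          |G κ x - G 0 x| ≤ η ∧
          |derivWithin (G κ) (Set.Icc (0:ℝ) ((c 0) ^ 2 / 2 - ε)) x -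
              derivWithin (G 0) (Set.Icc (0:ℝ) ((c 0) ^ 2 / 2 - ε)) x| ≤ η) := by
  have hc01 : 1 < c 0 := hc0.1
  have hc0pos : 0 < c 0 := by linarith
  have hc0sq : 0 < (c 0) ^ 2 := by positivity
  set A : ℝ := (c 0) ^ 2 / 2 with hAdef
  have hAε : 0 < A - ε := by simp only [hAdef]; linarith
  set S : Set ℝ := Set.Icc (0:ℝ) (A - ε) with hSdef
  set R : ℝ := Real.sqrt ((c 0) ^ 2 / ε) with hRdef
  have hR2 : R ^ 2 = (c 0) ^ 2 / ε := Real.sq_sqrt (by positivity)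
  have hR0 : 0 ≤ R := Real.sqrt_nonneg _
  have hRgt : (2:ℝ) < R ^ 2 := by rw [hR2, lt_div_iff₀ hε1]; linarith
  have hR1 : 1 < R := by nlinarith [hR0, hRgt]
  have hH0R : Hfun 0 (c 0) R = A - ε / 2 := by
    simp only [Hfun, hAdef]
    rw [hR2]
    field_simp
    ring
  -- basic tendsto facts
  have hct := c_tendsto c hc0 hck
  have hκt : Tendsto (fun κ : ℝ => κ) (𝓝[>] (0:ℝ)) (𝓝 0) :=
    tendsto_id.mono_left nhdsWithin_le_nhds
  have hc2t : Tendsto (fun κ => (c κ) ^ 2) (𝓝[>] (0:ℝ)) (𝓝 ((c 0) ^ 2)) := hct.pow 2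
  set M : ℝ → ℝ := fun κ => |(c κ) ^ 2 - (c 0) ^ 2| with hMdef
  have hMt : Tendsto M (𝓝[>] (0:ℝ)) (𝓝 0) := by
    have := (hc2t.sub_const ((c 0) ^ 2)).abs
    simpa using this
  have hmullog : Tendsto (fun κ : ℝ => κ * Real.log κ) (𝓝[>] (0:ℝ)) (𝓝 0) := by
    have h := Real.continuous_mul_log.continuousAt (x := (0:ℝ))
    unfold ContinuousAt at h
    have h2 : Tendsto (fun κ : ℝ => κ * Real.log κ) (𝓝 (0:ℝ)) (𝓝 0) := by simpa using h
    exact h2.mono_left nhdsWithin_le_nhds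
  -- tendsto of H at the top endpoint
  have htopt : Tendsto (fun κ => Hfun κ (c κ) (c κ / Real.sqrt κ)) (𝓝[>] (0:ℝ)) (𝓝 A) := by
    have heq : ∀ᶠ κ in 𝓝[>] (0:ℝ), Hfun κ (c κ) (c κ / Real.sqrt κ)
        = (c κ) ^ 2 / 2 - κ / 2 - κ * Real.log (c κ) + κ / 2 * Real.log κ := by
      filter_upwards [self_mem_nhdsWithin, hct.eventually (eventually_gt_nhds hc0pos)]
        with κ hκ hcκ
      have hκ0 : (0:ℝ) < κ := hκ
      have hsκ : 0 < Real.sqrt κ := Real.sqrt_pos.2 hκ0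
      have hsq : Real.sqrt κ ^ 2 = κ := Real.sq_sqrt hκ0.le
      have hdiv : (c κ / Real.sqrt κ) ^ 2 = (c κ) ^ 2 / κ := by
        rw [div_pow, hsq]
      simp only [Hfun]
      rw [hdiv, Real.log_div (ne_of_gt hcκ) (ne_of_gt hsκ), Real.log_sqrt hκ0.le]
      field_simp
      ring
    have hrhs : Tendsto (fun κ => (c κ) ^ 2 / 2 - κ / 2 - κ * Real.log (c κ) + κ / 2 * Real.log κ)
        (𝓝[>] (0:ℝ)) (𝓝 A) := by
      have t1 := hc2t.div_const 2
      have t2 := hκt.div_const 2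
      have t3 : Tendsto (fun κ => κ * Real.log (c κ)) (𝓝[>] (0:ℝ)) (𝓝 0) := by
        have hlog : Tendsto (fun κ => Real.log (c κ)) (𝓝[>] (0:ℝ)) (𝓝 (Real.log (c 0))) :=
          ((Real.continuousAt_log (ne_of_gt hc0pos)).tendsto).comp hct
        simpa using hκt.mul hlog
      have t4 : Tendsto (fun κ : ℝ => κ / 2 * Real.log κ) (𝓝[>] (0:ℝ)) (𝓝 0) := by
        have := hmullog.div_const 2
        have h4 : Tendsto (fun κ : ℝ => κ * Real.log κ / 2) (𝓝[>] (0:ℝ)) (𝓝 0) := by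
          simpa using this
        exact h4.congr (fun κ => by ring)
      have := ((t1.sub t2).sub t3).add t4
      simpa [hAdef] using this
    exact hrhs.congr' (by filter_upwards [heq] with κ h using h.symm)
  -- tendsto of H κ (c κ) R
  have hHRt : Tendsto (fun κ => Hfun κ (c κ) R) (𝓝[>] (0:ℝ)) (𝓝 (A - ε / 2)) := by
    have t1 := (hc2t.div_const 2).mul_const (1 - 1 / R ^ 2)
    have t2 := hκt.mul_const (Real.log R)
    have := t1.sub t2
    rw [← hH0R]
    simp only [Hfun]
    simpa using this
  -- choose κ₀
  have hev1 : ∀ᶠ κ in 𝓝[>] (0:ℝ), A - ε ≤ Hfun κ (c κ) (c κ / Real.sqrt κ) :=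
    htopt.eventually (eventually_ge_nhds (by linarith))
  obtain ⟨κ₀, hκ₀pos, hκ₀⟩ := (nhdsGT_basis (0:ℝ)).eventually_iff.1 hev1
  refine ⟨κ₀, hκ₀pos, fun κ hκ hκκ₀ => hκ₀ ⟨hκ, hκκ₀⟩, ?_⟩
  -- Part 2
  intro η hη
  have hlogRnn : 0 ≤ Real.log R := Real.log_nonneg hR1.le
  set E1 : ℝ → ℝ := fun κ => 2 * R ^ 4 / (c 0) ^ 2 * (M κ / 2 + κ * Real.log R) with hE1def
  set E2 : ℝ → ℝ := fun κ =>
    (3 * (c 0) ^ 2 * R ^ 2 * E1 κ + R ^ 3 * M κ + R ^ 5 * κ) / ((c 0) ^ 4 / 2) with hE2def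
  have hE1t : Tendsto E1 (𝓝[>] (0:ℝ)) (𝓝 0) := by
    have := ((hMt.div_const 2).add (hκt.mul_const (Real.log R))).const_mul
      (2 * R ^ 4 / (c 0) ^ 2)
    simpa [hE1def] using this
  have hE2t : Tendsto E2 (𝓝[>] (0:ℝ)) (𝓝 0) := by
    have := (((hE1t.const_mul (3 * (c 0) ^ 2 * R ^ 2)).add (hMt.const_mul (R ^ 3))).add
      (hκt.const_mul (R ^ 5))).div_const ((c 0) ^ 4 / 2)
    simpa [hE2def] using this
  have ev1 : ∀ᶠ κ in 𝓝[>] (0:ℝ), M κ ≤ (c 0) ^ 2 / 4 :=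
    hMt.eventually (eventually_le_nhds (by positivity))
  have ev2 : ∀ᶠ κ in 𝓝[>] (0:ℝ), κ ≤ (c 0) ^ 2 / (4 * R ^ 4) :=
    hκt.eventually (eventually_le_nhds (by positivity))
  have ev3 : ∀ᶠ κ in 𝓝[>] (0:ℝ), A - ε < Hfun κ (c κ) R :=
    hHRt.eventually (eventually_gt_nhds (by linarith))
  have ev4 : ∀ᶠ κ in 𝓝[>] (0:ℝ), E1 κ ≤ η := hE1t.eventually (eventually_le_nhds hη)
  have ev5 : ∀ᶠ κ in 𝓝[>] (0:ℝ), E2 κ ≤ η := hE2t.eventually (eventually_le_nhds hη)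
  obtain ⟨δ, hδpos, hδ⟩ := (nhdsGT_basis (0:ℝ)).eventually_iff.1
    (ev1.and (ev2.and (ev3.and (ev4.and ev5))))
  refine ⟨δ, hδpos, ?_⟩
  intro κ hκ0 hκδ _ x hx
  obtain ⟨h1, h2, h3, h4, h5⟩ := hδ ⟨hκ0, hκδ⟩
  simp only [hMdef] at h1
  clear hδ ev1 ev2 ev3 ev4 ev5 hMt hct hκt hc2t hmullog htopt hHRt hev1 hκ₀ hE1t hE2t hδpos hκδ
  have hK2lo : 3 / 4 * (c 0) ^ 2 ≤ (c κ) ^ 2 := by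
    have habs := abs_le.1 h1
    linarith [habs.1]
  have hR4pos : (0:ℝ) < R ^ 4 := by positivity
  have hκR4 : κ * R ^ 4 ≤ (c 0) ^ 2 / 4 := by
    have h := mul_le_mul_of_nonneg_right h2 hR4pos.le
    rwa [div_mul_eq_mul_div, mul_comm (4:ℝ) (R ^ 4), ← div_div,
      mul_div_assoc, div_self (ne_of_gt hR4pos), mul_one] at h
  have hR21 : (1:ℝ) ≤ R ^ 2 := by
    have h := pow_le_pow_left₀ zero_le_one hR1.le 2
    simpa using h
  have hκR2 : κ * R ^ 2 ≤ (c 0) ^ 2 / 4 := by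
    have hR24 : R ^ 2 ≤ R ^ 4 := by
      have h := mul_le_mul_of_nonneg_left hR21 (sq_nonneg R)
      calc R ^ 2 = R ^ 2 * 1 := by ring
        _ ≤ R ^ 2 * R ^ 2 := h
        _ = R ^ 4 := by ring
    have h := mul_le_mul_of_nonneg_left hR24 hκ0.le
    linarith
  have hcκpos : 0 < c κ := by
    have h := (hck κ hκ0).1
    exact lt_of_le_of_lt (Real.sqrt_nonneg _) h
  have hRtop : R ≤ c κ / Real.sqrt κ := by
    rw [le_div_iff₀ (Real.sqrt_pos.2 hκ0)]
    have hsq : Real.sqrt κ ^ 2 = κ := Real.sq_sqrt hκ0.le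
    have hsq2 : (R * Real.sqrt κ) ^ 2 ≤ (c κ) ^ 2 := by
      rw [mul_pow, hsq]
      have : R ^ 2 * κ = κ * R ^ 2 := by ring
      linarith [hκR2, hK2lo, hc0sq]
    have hnn : 0 ≤ R * Real.sqrt κ := mul_nonneg hR0 (Real.sqrt_nonneg κ)
    calc R * Real.sqrt κ = Real.sqrt ((R * Real.sqrt κ) ^ 2) := (Real.sqrt_sq hnn).symm
      _ ≤ Real.sqrt ((c κ) ^ 2) := Real.sqrt_le_sqrt hsq2
      _ = c κ := Real.sqrt_sq hcκpos.le
  -- uniform lower bound on increments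
  have hlamk : ∀ a b : ℝ, 1 ≤ b → b ≤ a → a ≤ R →
      (c 0) ^ 2 / (2 * R ^ 4) * (a - b) ≤ Hfun κ (c κ) a - Hfun κ (c κ) b := by
    intro a b hb hba haR
    have h := Hfun_lower (κ := κ) (c := c κ) (R := R) hκ0.le hb hba haR
    have hcoef : (c 0) ^ 2 / (2 * R ^ 4) ≤ (c κ) ^ 2 / R ^ 4 - κ := by
      have key : (c κ) ^ 2 / R ^ 4 - κ - (c 0) ^ 2 / (2 * R ^ 4)
          = ((c κ) ^ 2 - κ * R ^ 4 - (c 0) ^ 2 / 2) / R ^ 4 := by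
        field_simp
      have h2 : (0:ℝ) ≤ (c κ) ^ 2 / R ^ 4 - κ - (c 0) ^ 2 / (2 * R ^ 4) := by
        rw [key]
        apply div_nonneg _ hR4pos.le
        linarith
      linarith
    linarith [mul_le_mul_of_nonneg_right hcoef (sub_nonneg.2 hba), h]
  have hlam0 : ∀ a b : ℝ, 1 ≤ b → b ≤ a → a ≤ R →
      (c 0) ^ 2 / (2 * R ^ 4) * (a - b) ≤ Hfun 0 (c 0) a - Hfun 0 (c 0) b := by
    intro a b hb hba haR
    have h := Hfun_lower (κ := 0) (c := c 0) (R := R) le_rfl hb hba haR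
    have hcoef : (c 0) ^ 2 / (2 * R ^ 4) ≤ (c 0) ^ 2 / R ^ 4 - 0 := by
      rw [sub_zero]
      apply div_le_div_of_nonneg_left hc0sq.le hR4pos
      linarith
    linarith [mul_le_mul_of_nonneg_right hcoef (sub_nonneg.2 hba), h]
  -- surjectivity / inverse description on S
  have hcont : ∀ κ' c' : ℝ, ContinuousOn (fun ρ => Hfun κ' c' ρ) (Icc 1 R) := by
    intro κ' c' ρ hρ
    exact ((hasDerivAt_Hfun κ' c' ρ (by linarith [hρ.1])).continuousAt).continuousWithinAt
  have hH1 : ∀ κ' c' : ℝ, Hfun κ' c' 1 = 0 := by intro κ' c'; simp [Hfun]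
  have hsurjκ : ∀ y ∈ S, ∃ ρ, ρ ∈ Icc 1 R ∧ Hfun κ (c κ) ρ = y ∧ G κ y = ρ := by
    intro y hy
    have hy' : y ∈ Icc (Hfun κ (c κ) 1) (Hfun κ (c κ) R) := by
      rw [hH1]
      exact ⟨hy.1, le_of_lt (lt_of_le_of_lt hy.2 h3)⟩
    obtain ⟨ρ, hρ, hρy⟩ := intermediate_value_Icc (by linarith : (1:ℝ) ≤ R) (hcont κ (c κ)) hy'
    exact ⟨ρ, hρ, hρy, by rw [← hρy, hGk κ hκ0 ρ hρ.1 (le_trans hρ.2 hRtop)]⟩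
  have hsurj0 : ∀ y ∈ S, ∃ ρ, ρ ∈ Icc 1 R ∧ Hfun 0 (c 0) ρ = y ∧ G 0 y = ρ := by
    intro y hy
    have hy' : y ∈ Icc (Hfun 0 (c 0) 1) (Hfun 0 (c 0) R) := by
      rw [hH1, hH0R]
      exact ⟨hy.1, by linarith [hy.2]⟩
    obtain ⟨ρ, hρ, hρy⟩ := intermediate_value_Icc (by linarith : (1:ℝ) ≤ R) (hcont 0 (c 0)) hy'
    exact ⟨ρ, hρ, hρy, by rw [← hρy, hG0 ρ hρ.1]⟩
  obtain ⟨ρκ, hρκmem, hHρκ, hGκx⟩ := hsurjκ x hx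
  obtain ⟨ρ0, hρ0mem, hHρ0, hG0x⟩ := hsurj0 x hx
  obtain ⟨hρκ1, hρκR⟩ := hρκmem
  obtain ⟨hρ01, hρ0R⟩ := hρ0mem
  have hρκpos : (0:ℝ) < ρκ := by linarith
  have hρ0pos : (0:ℝ) < ρ0 := by linarith
  have hlampos : (0:ℝ) < (c 0) ^ 2 / (2 * R ^ 4) := by positivity
  have hcancel : (c 0) ^ 2 / (2 * R ^ 4) * E1 κ
      = |(c κ) ^ 2 - (c 0) ^ 2| / 2 + κ * Real.log R := by
    simp only [hE1def, hMdef]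
    field_simp
  -- closeness of the two inverse points
  have hdiffbound : |ρκ - ρ0| ≤ E1 κ := by
    have hd : Hfun 0 (c 0) ρκ - Hfun 0 (c 0) ρ0
        = ((c 0) ^ 2 - (c κ) ^ 2) / 2 * (1 - 1 / ρκ ^ 2) + κ * Real.log ρκ := by
      rw [hHρ0, ← hHρκ]
      simp only [Hfun]
      ring
    have hfrac1 : 1 / ρκ ^ 2 ≤ 1 := by
      rw [div_le_one (by positivity)]
      have h := pow_le_pow_left₀ zero_le_one hρκ1 2
      simpa using h
    have hfrac0 : 0 ≤ 1 - 1 / ρκ ^ 2 := by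
      have : 0 < 1 / ρκ ^ 2 := by positivity
      linarith
    have hlogρnn : 0 ≤ Real.log ρκ := Real.log_nonneg hρκ1
    have hlogρR : Real.log ρκ ≤ Real.log R := Real.log_le_log hρκpos hρκR
    have habs2 : |((c 0) ^ 2 - (c κ) ^ 2) / 2 * (1 - 1 / ρκ ^ 2)|
        ≤ |(c κ) ^ 2 - (c 0) ^ 2| / 2 := by
      rw [abs_mul, abs_div, abs_sub_comm, abs_of_nonneg (by norm_num : (0:ℝ) ≤ 2),
        abs_of_nonneg hfrac0]
      have hMhalf : (0:ℝ) ≤ |(c κ) ^ 2 - (c 0) ^ 2| / 2 := by positivity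
      calc |(c κ) ^ 2 - (c 0) ^ 2| / 2 * (1 - 1 / ρκ ^ 2)
          ≤ |(c κ) ^ 2 - (c 0) ^ 2| / 2 * 1 :=
            mul_le_mul_of_nonneg_left (by linarith [one_div_nonneg.2 (sq_nonneg ρκ)]) hMhalf
        _ = |(c κ) ^ 2 - (c 0) ^ 2| / 2 := mul_one _
    have hdabs : |Hfun 0 (c 0) ρκ - Hfun 0 (c 0) ρ0|
        ≤ |(c κ) ^ 2 - (c 0) ^ 2| / 2 + κ * Real.log R := by
      rw [hd]
      refine le_trans (abs_add_le _ _) ?_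
      have hterm : |κ * Real.log ρκ| ≤ κ * Real.log R := by
        rw [abs_of_nonneg (mul_nonneg hκ0.le hlogρnn)]
        exact mul_le_mul_of_nonneg_left hlogρR hκ0.le
      linarith
    rcases le_total ρ0 ρκ with hle | hle
    · rw [abs_of_nonneg (by linarith)]
      have hmul := hlam0 ρκ ρ0 hρ01 hle hρκR
      have hX : Hfun 0 (c 0) ρκ - Hfun 0 (c 0) ρ0
          ≤ |(c κ) ^ 2 - (c 0) ^ 2| / 2 + κ * Real.log R :=
        le_trans (le_abs_self _) hdabs
      have hfin : (c 0) ^ 2 / (2 * R ^ 4) * (ρκ - ρ0) ≤ (c 0) ^ 2 / (2 * R ^ 4) * E1 κ := by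
        rw [hcancel]; linarith
      exact le_of_mul_le_mul_left hfin hlampos
    · rw [abs_of_nonpos (by linarith), neg_sub]
      have hmul := hlam0 ρ0 ρκ hρκ1 hle hρ0R
      have hX : Hfun 0 (c 0) ρ0 - Hfun 0 (c 0) ρκ
          ≤ |(c κ) ^ 2 - (c 0) ^ 2| / 2 + κ * Real.log R := by
        have := neg_abs_le (Hfun 0 (c 0) ρκ - Hfun 0 (c 0) ρ0)
        linarith [hdabs]
      have hfin : (c 0) ^ 2 / (2 * R ^ 4) * (ρ0 - ρκ) ≤ (c 0) ^ 2 / (2 * R ^ 4) * E1 κ := by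
        rw [hcancel]; linarith
      exact le_of_mul_le_mul_left hfin hlampos
  constructor
  · rw [hGκx, hG0x]
    exact le_trans hdiffbound h4
  -- derivative part
  have hudiff : UniqueDiffWithinAt ℝ S x := (uniqueDiffOn_Icc hAε) x hx
  have hρκ2R : ρκ ^ 2 ≤ R ^ 2 := pow_le_pow_left₀ (by linarith) hρκR 2
  have hρ02R : ρ0 ^ 2 ≤ R ^ 2 := pow_le_pow_left₀ (by linarith) hρ0R 2
  have hκρκ2 : κ * ρκ ^ 2 ≤ (c 0) ^ 2 / 4 := by
    linarith [mul_le_mul_of_nonneg_left hρκ2R hκ0.le, hκR2]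
  have hDκpos : 0 < (c κ) ^ 2 - κ * ρκ ^ 2 := by linarith
  have hfκ' : ((c κ) ^ 2 - κ * ρκ ^ 2) / ρκ ^ 3 ≠ 0 := ne_of_gt (by positivity)
  have hf0' : ((c 0) ^ 2 - 0 * ρ0 ^ 2) / ρ0 ^ 3 ≠ 0 := by
    rw [zero_mul, sub_zero]
    exact ne_of_gt (by positivity)
  have hlip : ∀ (κ' c' : ℝ), (∀ a b : ℝ, 1 ≤ b → b ≤ a → a ≤ R →
        (c 0) ^ 2 / (2 * R ^ 4) * (a - b) ≤ Hfun κ' c' a - Hfun κ' c' b) →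
      (∀ y ∈ S, ∃ ρ, ρ ∈ Icc 1 R ∧ Hfun κ' c' ρ = y ∧ G κ' y = ρ) →
      ContinuousWithinAt (G κ') S x := by
    intro κ' c' hmono hsurj
    apply continuousWithinAt_of_lip (K := 2 * R ^ 4 / (c 0) ^ 2) (by positivity)
    intro y hy
    obtain ⟨ρy, hρymem, hHρy, hGy⟩ := hsurj y hy
    obtain ⟨ρx, hρxmem, hHρx, hGx⟩ := hsurj x hx
    rw [hGy, hGx]
    have hid : (c 0) ^ 2 / (2 * R ^ 4) * (2 * R ^ 4 / (c 0) ^ 2 * |y - x|) = |y - x| := by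
      rw [← mul_assoc]
      have hone : (c 0) ^ 2 / (2 * R ^ 4) * (2 * R ^ 4 / (c 0) ^ 2) = 1 := by
        have hc0ne : c 0 ≠ 0 := ne_of_gt hc0pos
        have hRne : R ≠ 0 := ne_of_gt (lt_trans one_pos hR1)
        field_simp
      rw [hone, one_mul]
    rcases le_total ρx ρy with hle | hle
    · have hmul := hmono ρy ρx hρxmem.1 hle hρymem.2
      rw [hHρy, hHρx] at hmul
      rw [abs_of_nonneg (by linarith)]
      have hfin : (c 0) ^ 2 / (2 * R ^ 4) * (ρy - ρx)
          ≤ (c 0) ^ 2 / (2 * R ^ 4) * (2 * R ^ 4 / (c 0) ^ 2 * |y - x|) := by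
        rw [hid]
        exact le_trans hmul (le_abs_self _)
      exact le_of_mul_le_mul_left hfin hlampos
    · have hmul := hmono ρx ρy hρymem.1 hle hρxmem.2
      rw [hHρy, hHρx] at hmul
      rw [abs_of_nonpos (by linarith), neg_sub]
      have hfin : (c 0) ^ 2 / (2 * R ^ 4) * (ρx - ρy)
          ≤ (c 0) ^ 2 / (2 * R ^ 4) * (2 * R ^ 4 / (c 0) ^ 2 * |y - x|) := by
        rw [hid]
        exact le_trans hmul (by rw [abs_sub_comm]; exact le_abs_self _)
      exact le_of_mul_le_mul_left hfin hlampos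
  have hHDκ : HasDerivWithinAt (G κ) ((((c κ) ^ 2 - κ * ρκ ^ 2) / ρκ ^ 3)⁻¹) S x := by
    refine hasDerivWithinAt_leftInv (f := fun r => Hfun κ (c κ) r) (hlip κ (c κ) hlamk hsurjκ) ?_ hfκ' ?_ hx
    · rw [hGκx]; exact hasDerivAt_Hfun κ (c κ) ρκ hρκpos
    · intro y hy
      obtain ⟨ρy, _, hHρy, hGy⟩ := hsurjκ y hy
      rw [hGy]; exact hHρy
  have hHD0 : HasDerivWithinAt (G 0) ((((c 0) ^ 2 - 0 * ρ0 ^ 2) / ρ0 ^ 3)⁻¹) S x := by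
    refine hasDerivWithinAt_leftInv (f := fun r => Hfun 0 (c 0) r) (hlip 0 (c 0) hlam0 hsurj0) ?_ hf0' ?_ hx
    · rw [hG0x]; exact hasDerivAt_Hfun 0 (c 0) ρ0 hρ0pos
    · intro y hy
      obtain ⟨ρy, _, hHρy, hGy⟩ := hsurj0 y hy
      rw [hGy]; exact hHρy
  rw [hHDκ.derivWithin hudiff, hHD0.derivWithin hudiff]
  have hsimpκ : ((((c κ) ^ 2 - κ * ρκ ^ 2) / ρκ ^ 3)⁻¹) = ρκ ^ 3 / ((c κ) ^ 2 - κ * ρκ ^ 2) :=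
    inv_div _ _
  have hsimp0 : ((((c 0) ^ 2 - 0 * ρ0 ^ 2) / ρ0 ^ 3)⁻¹) = ρ0 ^ 3 / (c 0) ^ 2 := by
    rw [zero_mul, sub_zero, inv_div]
  rw [hsimpκ, hsimp0]
  have hDlo : (c 0) ^ 2 / 2 ≤ (c κ) ^ 2 - κ * ρκ ^ 2 := by linarith
  have key : ρκ ^ 3 / ((c κ) ^ 2 - κ * ρκ ^ 2) - ρ0 ^ 3 / (c 0) ^ 2
      = ((c 0) ^ 2 * (ρκ ^ 3 - ρ0 ^ 3) + ρ0 ^ 3 * ((c 0) ^ 2 - (c κ) ^ 2)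
          + ρ0 ^ 3 * κ * ρκ ^ 2) / (((c κ) ^ 2 - κ * ρκ ^ 2) * (c 0) ^ 2) := by
    rw [div_sub_div _ _ hDκpos.ne' hc0sq.ne']
    ring
  rw [key, abs_div]
  have hρ03R : ρ0 ^ 3 ≤ R ^ 3 := pow_le_pow_left₀ (by linarith) hρ0R 3
  have hnum : |(c 0) ^ 2 * (ρκ ^ 3 - ρ0 ^ 3) + ρ0 ^ 3 * ((c 0) ^ 2 - (c κ) ^ 2)
      + ρ0 ^ 3 * κ * ρκ ^ 2| ≤ 3 * (c 0) ^ 2 * R ^ 2 * E1 κ + R ^ 3 * M κ + R ^ 5 * κ := by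
    refine le_trans (abs_add_le _ _) (add_le_add (le_trans (abs_add_le _ _) (add_le_add ?_ ?_)) ?_)
    · rw [abs_mul, abs_of_nonneg hc0sq.le]
      have hcube : |ρκ ^ 3 - ρ0 ^ 3| ≤ 3 * R ^ 2 * |ρκ - ρ0| := by
        have hfac : ρκ ^ 3 - ρ0 ^ 3 = (ρκ - ρ0) * (ρκ ^ 2 + ρκ * ρ0 + ρ0 ^ 2) := by ring
        rw [hfac, abs_mul]
        have h2 : |ρκ ^ 2 + ρκ * ρ0 + ρ0 ^ 2| ≤ 3 * R ^ 2 := by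
          rw [abs_of_nonneg (add_nonneg (add_nonneg (sq_nonneg ρκ)
            (mul_nonneg hρκpos.le hρ0pos.le)) (sq_nonneg ρ0))]
          have hmulR : ρκ * ρ0 ≤ R ^ 2 := by
            have h := mul_le_mul hρκR hρ0R hρ0pos.le hR0
            calc ρκ * ρ0 ≤ R * R := h
              _ = R ^ 2 := by ring
          linarith [hρκ2R, hρ02R]
        calc |ρκ - ρ0| * |ρκ ^ 2 + ρκ * ρ0 + ρ0 ^ 2|
            ≤ |ρκ - ρ0| * (3 * R ^ 2) := mul_le_mul_of_nonneg_left h2 (abs_nonneg _)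
          _ = 3 * R ^ 2 * |ρκ - ρ0| := by ring
      calc (c 0) ^ 2 * |ρκ ^ 3 - ρ0 ^ 3|
          ≤ (c 0) ^ 2 * (3 * R ^ 2 * |ρκ - ρ0|) :=
            mul_le_mul_of_nonneg_left hcube hc0sq.le
        _ ≤ (c 0) ^ 2 * (3 * R ^ 2 * E1 κ) := by
            have h3R : (0:ℝ) ≤ 3 * R ^ 2 := by positivity
            exact mul_le_mul_of_nonneg_left
              (mul_le_mul_of_nonneg_left hdiffbound h3R) hc0sq.le
        _ = 3 * (c 0) ^ 2 * R ^ 2 * E1 κ := by ring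
    · rw [abs_mul, abs_of_nonneg (by positivity : (0:ℝ) ≤ ρ0 ^ 3)]
      have e : |(c 0) ^ 2 - (c κ) ^ 2| = M κ := by
        rw [abs_sub_comm]
      rw [e]
      have hMnn : 0 ≤ M κ := by simp only [hMdef]; positivity
      exact mul_le_mul_of_nonneg_right hρ03R hMnn
    · rw [abs_of_nonneg (mul_nonneg (mul_nonneg (by positivity) hκ0.le) (sq_nonneg ρκ))]
      have t1 : κ * ρκ ^ 2 ≤ κ * R ^ 2 := mul_le_mul_of_nonneg_left hρκ2R hκ0.le
      have t2 : (0:ℝ) ≤ κ * ρκ ^ 2 := mul_nonneg hκ0.le (sq_nonneg ρκ)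
      have hR3nn : (0:ℝ) ≤ R ^ 3 := pow_nonneg hR0 3
      calc ρ0 ^ 3 * κ * ρκ ^ 2 = ρ0 ^ 3 * (κ * ρκ ^ 2) := by ring
        _ ≤ R ^ 3 * (κ * R ^ 2) := mul_le_mul hρ03R t1 t2 hR3nn
        _ = R ^ 5 * κ := by ring
  have hdenpos : (0:ℝ) < (c 0) ^ 4 / 2 := by positivity
  have hden : (c 0) ^ 4 / 2 ≤ |((c κ) ^ 2 - κ * ρκ ^ 2) * (c 0) ^ 2| := by
    rw [abs_of_nonneg (mul_nonneg hDκpos.le hc0sq.le)]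
    have h := mul_le_mul_of_nonneg_right hDlo hc0sq.le
    have he : (c 0) ^ 2 / 2 * (c 0) ^ 2 = (c 0) ^ 4 / 2 := by ring
    linarith
  have hNnn : 0 ≤ 3 * (c 0) ^ 2 * R ^ 2 * E1 κ + R ^ 3 * M κ + R ^ 5 * κ := by
    have hE1nn : 0 ≤ E1 κ := by
      simp only [hE1def, hMdef]
      have : 0 ≤ |(c κ) ^ 2 - (c 0) ^ 2| := abs_nonneg _
      have hlog := hlogRnn
      have hκnn := hκ0.le
      positivity
    have hMnn : 0 ≤ M κ := by simp only [hMdef]; positivity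
    have := hκ0.le
    positivity
  have hfinal := div_le_div₀ hNnn hnum hdenpos hden
  refine le_trans hfinal (le_trans (le_of_eq ?_) h5)
  simp only [hE2def]
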